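/- Let F ∈ ℂ[x₀,x₁,x₂] be a nonzero homogeneous polynomial of degree d ≥ 1 and let Q ∈ ℂ³ be a nonzero vector. If F vanishes to order at least d at Q (i.e., every iterated partial derivative of F of total order at most d−1 vanishes at Q), then there exist linear forms ℓ₁,…,ℓ_d ∈ ℂ[x₀,x₁,x₂], each vanishing at Q, such that F = ℓ₁ ⋯ ℓ_d. In other words, a plane curve of degree d with a point of multiplicity at least d is a cone of d lines through that point. -/

import Mathlib

/-!
After a linear change of coordinates we may assume `Q = (0, 0, 1)`; vanishing to order `d` is
preserved, because by the chain rule the derivatives of order `k` of `F ∘ A` are linear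
combinations of the derivatives of order `k` of `F`, composed with `A`. At `Q = (0, 0, 1)` the
derivative `∂₀^a ∂₁^b F` evaluates to `a! b!` times the coefficient of `x₀^a x₁^b x₂^(d-a-b)`,
so every monomial of `F` containing `x₂` has coefficient zero. Hence `F` is a binary form in
`x₀, x₁`, and over `ℂ` a binary form of degree `d` is a product of `d` linear forms: factor its
dehomogenization `F(t, 1)` and homogenize back. None of these linear forms involves `x₂`, so all
of them vanish at `Q`.
-/

open MvPolynomial

/-- Iterated partial derivative of `F` with respect to the multi-index `α`:
`∂₀^{α 0} ∂₁^{α 1} ∂₂^{α 2} F`. -/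
noncomputable def pd (α : Fin 3 → ℕ) (F : MvPolynomial (Fin 3) ℂ) : MvPolynomial (Fin 3) ℂ :=
  (fun G : MvPolynomial (Fin 3) ℂ => pderiv (0 : Fin 3) G)^[α 0]
    ((fun G : MvPolynomial (Fin 3) ℂ => pderiv (1 : Fin 3) G)^[α 1]
      ((fun G : MvPolynomial (Fin 3) ℂ => pderiv (2 : Fin 3) G)^[α 2] F))

/-- `F` vanishes to order at least `m` at `B`: every iterated partial derivative of `F`
of total order at most `m - 1` vanishes at `B`. -/
def ordGe (m : ℕ) (B : Fin 3 → ℂ) (F : MvPolynomial (Fin 3) ℂ) : Prop :=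
  ∀ α : Fin 3 → ℕ, α 0 + α 1 + α 2 < m → MvPolynomial.eval B (pd α F) = 0

namespace Polynomial

variable {K : Type*} [Field K] [IsAlgClosed K]

theorem exists_eq_mul_natDegree_le_one {p : K[X]} {n : ℕ} (hp : p.natDegree ≤ n + 1) :
    ∃ g r : K[X], g.natDegree ≤ 1 ∧ r.natDegree ≤ n ∧ p = g * r := by
  by_cases h0 : p.natDegree = 0
  · exact ⟨1, p, by simp, by omega, (one_mul p).symm⟩
  obtain ⟨a, ha⟩ := IsAlgClosed.exists_root p (degree_ne_of_natDegree_ne h0)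
  refine ⟨X - C a, p /ₘ (X - C a), by simp, ?_, (mul_divByMonic_eq_iff_isRoot.mpr ha).symm⟩
  rw [natDegree_divByMonic _ (monic_X_sub_C a), natDegree_X_sub_C]
  omega

theorem exists_eq_prod_natDegree_le_one {p : K[X]} {n : ℕ} (hn : 0 < n) (hp : p.natDegree ≤ n) :
    ∃ f : Fin n → K[X], (∀ k, (f k).natDegree ≤ 1) ∧ p = ∏ k, f k := by
  induction n, hn using Nat.le_induction generalizing p with
  | base => exact ⟨fun _ => p, fun _ => hp, by simp⟩
  | succ n _ ih =>
    obtain ⟨g, r, hg, hr, rfl⟩ := exists_eq_mul_natDegree_le_one hp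
    obtain ⟨f, hf, rfl⟩ := ih hr
    exact ⟨Fin.cons g f, Fin.cases hg hf, by simp [Fin.prod_univ_succ]⟩

end Polynomial

namespace MvPolynomial

variable {σ τ R : Type*} [CommSemiring R]

section PartialDerivatives

open Finsupp

theorem pderiv_comm (i j : σ) (p : MvPolynomial σ R) :
    pderiv i (pderiv j p) = pderiv j (pderiv i p) := by
  classical
  induction p using MvPolynomial.induction_on' with
  | monomial s a =>
    obtain rfl | hij := eq_or_ne i j
    · rfl
    simp only [pderiv_monomial, tsub_apply, single_eq_of_ne hij, single_eq_of_ne hij.symm,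
      tsub_zero, tsub_tsub, add_comm (single i 1)]
    ring_nf
  | add p q hp hq => simp only [map_add, hp, hq]

theorem pderiv_iterate_pderiv_comm (i j : σ) (n : ℕ) (p : MvPolynomial σ R) :
    pderiv i ((pderiv j)^[n] p) = (pderiv j)^[n] (pderiv i p) := by
  induction n generalizing p with
  | zero => rfl
  | succ n ih =>
    rw [Function.iterate_succ_apply', Function.iterate_succ_apply', pderiv_comm, ih]

theorem iterate_pderiv_monomial (i : σ) (n : ℕ) (s : σ →₀ ℕ) (a : R) :
    (pderiv i)^[n] (monomial s a) = monomial (s - single i n) (a * (s i).descFactorial n) := by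
  classical
  induction n with
  | zero => simp
  | succ n ih =>
    rw [Function.iterate_succ_apply', ih, pderiv_monomial, tsub_tsub, ← single_add,
      tsub_apply, single_eq_same, Nat.descFactorial_succ, Nat.cast_mul]
    ring_nf

theorem pderiv_bind₁ [Fintype σ] (f : σ → MvPolynomial τ R) (k : τ) (p : MvPolynomial σ R) :
    pderiv k (bind₁ f p) = ∑ i, pderiv k (f i) * bind₁ f (pderiv i p) := by
  classical
  induction p using MvPolynomial.induction_on with
  | C a => simp
  | add p q hp hq => simp only [map_add, hp, hq, mul_add, Finset.sum_add_distrib]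
  | mul_X p n hp =>
    simp only [map_mul, bind₁_X_right, Derivation.leibniz, pderiv_X, smul_eq_mul, hp,
      map_add, mul_add, Finset.sum_add_distrib, Finset.mul_sum]
    congr 1
    · simp [Pi.single_apply, mul_comm]
    · exact Finset.sum_congr rfl fun i _ => by ring

end PartialDerivatives

theorem IsHomogeneous.apply_add_apply_add_apply {φ : MvPolynomial (Fin 3) R} {n : ℕ}
    (hφ : φ.IsHomogeneous n) {s : Fin 3 →₀ ℕ} (hs : s ∈ φ.support) : s 0 + s 1 + s 2 = n := by
  rw [hφ.degree_eq_sum_deg_support hs, ← Finsupp.degree_apply, Finsupp.degree_eq_sum,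
    Fin.sum_univ_three]

theorem IsHomogeneous.natDegree_aeval_X_one_le {q : MvPolynomial (Fin 2) R} {n : ℕ}
    (hq : q.IsHomogeneous n) :
    (MvPolynomial.aeval ![(Polynomial.X : Polynomial R), 1] q).natDegree ≤ n := by
  rw [q.as_sum, map_sum]
  refine Polynomial.natDegree_sum_le_of_forall_le _ _ fun s hs => ?_
  have := hq.degree_eq_sum_deg_support hs
  rw [← Finsupp.degree_apply, Finsupp.degree_eq_sum, Fin.sum_univ_two] at this
  rw [aeval_monomial, Finsupp.prod_fintype _ _ (fun i => pow_zero _), Fin.prod_univ_two]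
  simp only [Matrix.cons_val_zero, Matrix.cons_val_one, one_pow, mul_one]
  exact (Polynomial.natDegree_C_mul_le _ _).trans
    ((Polynomial.natDegree_X_pow_le _).trans (by omega))

theorem IsHomogeneous.exists_eq_prod_of_isAlgClosed {K : Type*} [Field K] [IsAlgClosed K]
    {q : MvPolynomial (Fin 2) K} {n : ℕ} (hq : q.IsHomogeneous n) (hn : 0 < n) :
    ∃ ℓ : Fin n → MvPolynomial (Fin 2) K, (∀ k, (ℓ k).IsHomogeneous 1) ∧ q = ∏ k, ℓ k := by
  obtain ⟨f, hf, hpf⟩ :=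
    Polynomial.exists_eq_prod_natDegree_le_one hn hq.natDegree_aeval_X_one_le
  refine ⟨fun k => (f k).homogenize 1, fun k => Polynomial.isHomogeneous_homogenize _, ?_⟩
  have := Polynomial.homogenize_finsetProd (s := Finset.univ) (n := fun _ => 1) fun k _ => hf k
  rwa [← hpf, Finset.sum_const, Finset.card_univ, Fintype.card_fin, smul_eq_mul, mul_one,
    Polynomial.homogenize_eq_of_isHomogeneous hq rfl] at this

end MvPolynomial

namespace Matrix

variable {n R : Type*} [Fintype n] [CommSemiring R]

theorem eval_bind₁_toMvPolynomial (M : Matrix n n R) (c : n → R) (p : MvPolynomial n R) :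
    eval c (bind₁ M.toMvPolynomial p) = eval (M *ᵥ c) p := by
  change eval₂Hom (RingHom.id R) c _ = _
  rw [eval₂Hom_bind₁]
  exact congrArg (eval · p) (funext (M.toMvPolynomial_eval_eq_apply · c))

theorem bind₁_toMvPolynomial_bind₁_toMvPolynomial (M N : Matrix n n R) (p : MvPolynomial n R) :
    bind₁ N.toMvPolynomial (bind₁ M.toMvPolynomial p) = bind₁ (M * N).toMvPolynomial p := by
  rw [bind₁_bind₁]
  simp only [← toMvPolynomial_mul]

theorem bind₁_toMvPolynomial_one [DecidableEq n] (p : MvPolynomial n R) :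
    bind₁ (1 : Matrix n n R).toMvPolynomial p = p := by
  rw [toMvPolynomial_one, bind₁_X_left, AlgHom.id_apply]

theorem pderiv_toMvPolynomial [DecidableEq n] (M : Matrix n n R) (i k : n) :
    pderiv k (M.toMvPolynomial i) = C (M i k) := by
  simp [toMvPolynomial, ← C_mul_X_eq_monomial, Pi.single_apply]

end Matrix

open Matrix

theorem LinearEquiv.exists_apply_eq {K V : Type*} [Field K] [AddCommGroup V] [Module K V]
    {x y : V} (hx : x ≠ 0) (hy : y ≠ 0) : ∃ g : V ≃ₗ[K] V, g x = y := by
  obtain ⟨g, hg⟩ := Submodule.exists_linearEquiv_restrict_eq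
    ((LinearEquiv.toSpanNonzeroSingleton K V x hx).symm ≪≫ₗ
      LinearEquiv.toSpanNonzeroSingleton K V y hy)
  refine ⟨g, ?_⟩
  have := hg ⟨x, Submodule.mem_span_singleton_self x⟩
  rw [← LinearEquiv.toSpanNonzeroSingleton_one K V x hx, LinearEquiv.trans_apply,
    LinearEquiv.symm_apply_apply] at this
  simpa using this.symm

theorem Matrix.exists_mul_eq_one_mulVec_eq {K n : Type*} [Field K] [Fintype n] [DecidableEq n]
    {x y : n → K} (hx : x ≠ 0) (hy : y ≠ 0) :
    ∃ A B : Matrix n n K, A * B = 1 ∧ A *ᵥ x = y := by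
  obtain ⟨g, hg⟩ := LinearEquiv.exists_apply_eq (K := K) hx hy
  refine ⟨LinearMap.toMatrix' g.toLinearMap, LinearMap.toMatrix' g.symm.toLinearMap, ?_, ?_⟩
  · rw [← LinearMap.toMatrix'_comp]
    simp
  · simpa using hg

-- `0 ^ (t - a)` is what is left of `x ^ t` after `∂ₓ^a`, evaluated at `x = 0`.
theorem Nat.descFactorial_mul_zero_pow_sub {R : Type*} [Semiring R] (t a : ℕ) :
    (t.descFactorial a : R) * 0 ^ (t - a) = if t = a then (a.factorial : R) else 0 := by
  rcases lt_trichotomy t a with h | rfl | h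
  · simp [Nat.descFactorial_eq_zero_iff_lt.mpr h, h.ne]
  · simp [Nat.descFactorial_self]
  · simp [h.ne', zero_pow (Nat.sub_ne_zero_of_lt h)]

def IsConeOfLines {σ R : Type*} [CommSemiring R] (d : ℕ) (Q : σ → R) (F : MvPolynomial σ R) :
    Prop :=
  ∃ ℓ : Fin d → MvPolynomial σ R, (∀ k, (ℓ k).IsHomogeneous 1 ∧ eval Q (ℓ k) = 0) ∧ F = ∏ k, ℓ k

theorem IsConeOfLines.bind₁_toMvPolynomial {n R : Type*} [Fintype n] [CommSemiring R] {d : ℕ}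
    {P Q : n → R} {G : MvPolynomial n R} (hG : IsConeOfLines d P G) {B : Matrix n n R}
    (hBQ : B *ᵥ Q = P) : IsConeOfLines d Q (bind₁ B.toMvPolynomial G) := by
  obtain ⟨ℓ, hℓ, rfl⟩ := hG
  refine ⟨fun k => bind₁ B.toMvPolynomial (ℓ k), fun k => ⟨?_, ?_⟩, map_prod _ _ _⟩
  · simpa using (hℓ k).1.aeval _ B.toMvPolynomial_isHomogeneous
  · rw [eval_bind₁_toMvPolynomial, hBQ, (hℓ k).2]

theorem pd_add_single (α : Fin 3 → ℕ) (i : Fin 3) (F : MvPolynomial (Fin 3) ℂ) :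
    pd (α + Pi.single i 1) F = pderiv i (pd α F) := by
  fin_cases i <;> simp [pd, Function.iterate_succ_apply', pderiv_iterate_pderiv_comm]

theorem pd_finset_sum {ι : Type*} (α : Fin 3 → ℕ) (s : Finset ι)
    (f : ι → MvPolynomial (Fin 3) ℂ) : pd α (∑ i ∈ s, f i) = ∑ i ∈ s, pd α (f i) := by
  have h (G : MvPolynomial (Fin 3) ℂ) : pd α G = ((pderiv 0).toLinearMap ^ α 0 *
      (pderiv 1).toLinearMap ^ α 1 * (pderiv 2).toLinearMap ^ α 2 : Module.End ℂ _) G := by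
    simp only [Module.End.mul_apply, Module.End.pow_apply]
    rfl
  simp only [h, map_sum]

noncomputable def substDerivSpan (M : Matrix (Fin 3) (Fin 3) ℂ) (F : MvPolynomial (Fin 3) ℂ)
    (k : ℕ) : Submodule ℂ (MvPolynomial (Fin 3) ℂ) :=
  Submodule.span ℂ ((fun β => bind₁ M.toMvPolynomial (pd β F)) '' {β | β 0 + β 1 + β 2 = k})

section substDerivSpan

variable (M : Matrix (Fin 3) (Fin 3) ℂ) (F : MvPolynomial (Fin 3) ℂ)

theorem pderiv_mem_substDerivSpan {k : ℕ} {G : MvPolynomial (Fin 3) ℂ} (j : Fin 3)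
    (hG : G ∈ substDerivSpan M F k) : pderiv j G ∈ substDerivSpan M F (k + 1) := by
  induction hG using Submodule.span_induction with
  | mem G hG =>
    obtain ⟨β, hβ : β 0 + β 1 + β 2 = k, rfl⟩ := hG
    rw [pderiv_bind₁]
    refine Submodule.sum_mem _ fun i _ => ?_
    rw [pderiv_toMvPolynomial, ← smul_eq_C_mul, ← pd_add_single]
    refine Submodule.smul_mem _ _ (Submodule.subset_span ⟨_, ?_, rfl⟩)
    fin_cases i <;> simp <;> omega
  | zero => simp
  | add G H _ _ hG hH => simpa using Submodule.add_mem _ hG hH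
  | smul a G _ hG => simpa using Submodule.smul_mem _ a hG

theorem iterate_pderiv_mem_substDerivSpan {k : ℕ} {G : MvPolynomial (Fin 3) ℂ} (j : Fin 3)
    (n : ℕ) (hG : G ∈ substDerivSpan M F k) :
    (pderiv j)^[n] G ∈ substDerivSpan M F (k + n) := by
  induction n with
  | zero => exact hG
  | succ n ih =>
    rw [Function.iterate_succ_apply', ← add_assoc]
    exact pderiv_mem_substDerivSpan M F j ih

theorem pd_bind₁_mem_substDerivSpan (α : Fin 3 → ℕ) :
    pd α (bind₁ M.toMvPolynomial F) ∈ substDerivSpan M F (α 0 + α 1 + α 2) := by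
  have h0 : bind₁ M.toMvPolynomial F ∈ substDerivSpan M F 0 :=
    Submodule.subset_span ⟨0, by simp, rfl⟩
  have := iterate_pderiv_mem_substDerivSpan M F 0 (α 0) <|
    iterate_pderiv_mem_substDerivSpan M F 1 (α 1) <|
      iterate_pderiv_mem_substDerivSpan M F 2 (α 2) h0
  rwa [show α 0 + α 1 + α 2 = 0 + α 2 + α 1 + α 0 by ring]

theorem eval_eq_zero_of_mem_substDerivSpan {m k : ℕ} {B : Fin 3 → ℂ} (h : ordGe m (M *ᵥ B) F)
    (hk : k < m) {G : MvPolynomial (Fin 3) ℂ} (hG : G ∈ substDerivSpan M F k) : eval B G = 0 := by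
  induction hG using Submodule.span_induction with
  | mem G hG =>
    obtain ⟨β, hβ, rfl⟩ := hG
    rw [eval_bind₁_toMvPolynomial]
    exact h β (hβ ▸ hk)
  | zero => simp
  | add G H _ _ hG hH => simp [hG, hH]
  | smul a G _ hG => simp [hG]

end substDerivSpan

theorem ordGe_bind₁_toMvPolynomial {m : ℕ} {B : Fin 3 → ℂ} {F : MvPolynomial (Fin 3) ℂ}
    (M : Matrix (Fin 3) (Fin 3) ℂ) (h : ordGe m (M *ᵥ B) F) :
    ordGe m B (bind₁ M.toMvPolynomial F) := fun α hα =>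
  eval_eq_zero_of_mem_substDerivSpan M F h hα (pd_bind₁_mem_substDerivSpan M F α)

theorem eval_single_two_pd_monomial (a b : ℕ) (t : Fin 3 →₀ ℕ) (c : ℂ) :
    eval (Pi.single 2 1) (pd ![a, b, 0] (monomial t c)) =
      c * (if t 0 = a then (a.factorial : ℂ) else 0) *
        (if t 1 = b then (b.factorial : ℂ) else 0) := by
  simp only [pd, Matrix.cons_val_zero, Matrix.cons_val_one, Matrix.cons_val_two,
    iterate_pderiv_monomial, eval_monomial, Finsupp.prod_fintype _ _ (fun i => pow_zero _),
    Fin.prod_univ_three]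
  simp [← Nat.descFactorial_mul_zero_pow_sub]
  ring

theorem eval_single_two_pd_of_isHomogeneous {d : ℕ} {G : MvPolynomial (Fin 3) ℂ}
    (hG : G.IsHomogeneous d) {s : Fin 3 →₀ ℕ} (hs : s ∈ G.support) :
    eval (Pi.single 2 1) (pd ![s 0, s 1, 0] G) =
      coeff s G * ((s 0).factorial * (s 1).factorial) := by
  conv_lhs => rw [G.as_sum]
  rw [pd_finset_sum, map_sum, Finset.sum_eq_single s]
  · simp only [eval_single_two_pd_monomial, if_true]
    ring
  · intro t ht hts
    have : t 0 ≠ s 0 ∨ t 1 ≠ s 1 := by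
      by_contra! h
      refine hts (Finsupp.ext fun i => ?_)
      have := hG.apply_add_apply_add_apply ht
      have := hG.apply_add_apply_add_apply hs
      fin_cases i <;> simp <;> omega
    rcases this with h | h <;> simp [eval_single_two_pd_monomial, h]
  · exact fun h => absurd hs h

theorem two_notMem_vars_of_ordGe {d : ℕ} {G : MvPolynomial (Fin 3) ℂ} (hG : G.IsHomogeneous d)
    (h : ordGe d (Pi.single 2 1) G) : (2 : Fin 3) ∉ G.vars := by
  intro h2
  obtain ⟨s, hs, hs2⟩ := (mem_vars_iff_mem_support 2).mp h2
  have hdeg := hG.apply_add_apply_add_apply hs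
  have hs2 : s 2 ≠ 0 := Finsupp.mem_support_iff.mp hs2
  have := h ![s 0, s 1, 0] (by simp; omega)
  rw [eval_single_two_pd_of_isHomogeneous hG hs] at this
  exact mem_support_iff.mp hs (by simpa [Nat.factorial_ne_zero] using this)

theorem isConeOfLines_single_two {d : ℕ} (hd : 0 < d) {G : MvPolynomial (Fin 3) ℂ}
    (hG : G.IsHomogeneous d) (h : ordGe d (Pi.single 2 1) G) :
    IsConeOfLines d (Pi.single 2 1) G := by
  have hvars : (G.vars : Set (Fin 3)) ⊆ Set.range Fin.castSucc := fun i hi =>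
    Fin.exists_castSucc_eq.mpr (ne_of_mem_of_not_mem hi (two_notMem_vars_of_ordGe hG h))
  obtain ⟨g, rfl⟩ := exists_rename_eq_of_vars_subset_range G _ (Fin.castSucc_injective 2) hvars
  obtain ⟨ℓ, hℓ, rfl⟩ :=
    ((IsHomogeneous.rename_isHomogeneous_iff (Fin.castSucc_injective 2)).mp hG
      ).exists_eq_prod_of_isAlgClosed hd
  refine ⟨fun k => rename Fin.castSucc (ℓ k), fun k => ⟨(hℓ k).rename_isHomogeneous, ?_⟩,
    map_prod _ _ _⟩
  have : (Pi.single 2 1 : Fin 3 → ℂ) ∘ Fin.castSucc = 0 := by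
    funext i
    fin_cases i <;> rfl
  rw [eval_rename, this, eval_zero, constantCoeff_eq, (hℓ k).coeff_eq_zero (by simp)]

theorem cone_of_lines_general (d : ℕ) (hd : 1 ≤ d) (F : MvPolynomial (Fin 3) ℂ)
    (hF : F.IsHomogeneous d) (Q : Fin 3 → ℂ) (hQ : Q ≠ 0) (h : ordGe d Q F) :
    ∃ ℓ : Fin d → MvPolynomial (Fin 3) ℂ,
      (∀ k, (ℓ k).IsHomogeneous 1 ∧ MvPolynomial.eval Q (ℓ k) = 0) ∧
      F = ∏ k, ℓ k := by
  have he₂ : (Pi.single 2 1 : Fin 3 → ℂ) ≠ 0 := Pi.single_ne_zero_iff.mpr one_ne_zero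
  obtain ⟨A, B, hAB, hAQ⟩ := exists_mul_eq_one_mulVec_eq he₂ hQ
  have hBQ : B *ᵥ Q = Pi.single 2 1 := by
    rw [← hAQ, mulVec_mulVec, mul_eq_one_comm.mp hAB, one_mulVec]
  have hG : (bind₁ A.toMvPolynomial F).IsHomogeneous d := by
    simpa using hF.aeval _ A.toMvPolynomial_isHomogeneous
  have hGQ := ordGe_bind₁_toMvPolynomial A (hAQ ▸ h)
  have := (isConeOfLines_single_two hd hG hGQ).bind₁_toMvPolynomial hBQ
  rwa [bind₁_toMvPolynomial_bind₁_toMvPolynomial, hAB, bind₁_toMvPolynomial_one] at this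

/-- A nonzero homogeneous polynomial of degree `d ≥ 1` vanishing to order at least `d`
at a nonzero point `Q` is a product of `d` linear forms, each vanishing at `Q`
(a cone of `d` lines through `Q`). -/
theorem cone_of_lines (d : ℕ) (hd : 1 ≤ d) (F : MvPolynomial (Fin 3) ℂ) (hF0 : F ≠ 0)
    (hF : F.IsHomogeneous d) (Q : Fin 3 → ℂ) (hQ : Q ≠ 0) (h : ordGe d Q F) :
    ∃ ℓ : Fin d → MvPolynomial (Fin 3) ℂ,
      (∀ k, (ℓ k).IsHomogeneous 1 ∧ MvPolynomial.eval Q (ℓ k) = 0) ∧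
      F = ∏ k, ℓ k :=
  cone_of_lines_general d hd F hF Q hQ h
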